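/- arXiv:2408.03057 — 7 statements merged into one kernel-verified Lean document; each statement's English description precedes it below -/
import Mathlib

section
/- Let k ≥ 3 and let b_1, b_2, …, b_k be pairwise coprime integers with 1 < b_1 < b_2 < … < b_k. Then (b_1 + b_2 + … + b_k) / (b_1·b_2⋯b_k) ≤ 1/3 (equivalently, 3·(b_1 + … + b_k) ≤ b_1⋯b_k). -/
/-- Auxiliary: natural number version by induction on `n`. -/
lemma aux_sum_prod (b : ℕ → ℕ) (h0 : 2 ≤ b 0) (hm : StrictMono b)
    (hc : Nat.Coprime (b 0) (b 2)) :
    ∀ n, 3 ≤ n → 3 * ∑ i ∈ Finset.range n, b i ≤ ∏ i ∈ Finset.range n, b i := by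
  intro n hn
  induction n, hn using Nat.le_induction with
  | base =>
    simp only [Finset.sum_range_succ, Finset.prod_range_succ, Finset.sum_range_zero,
      Finset.prod_range_zero, one_mul, zero_add]
    have h1 : b 0 < b 1 := hm (by omega)
    have h2 : b 1 < b 2 := hm (by omega)
    have h5 : 5 ≤ b 2 := by
      by_contra h
      have e0 : b 0 = 2 := by omega
      have e2 : b 2 = 4 := by omega
      rw [e0, e2] at hc
      norm_num [Nat.Coprime] at hc
    zify at h0 h1 h2 h5 ⊢
    nlinarith [mul_nonneg (by linarith : (0:ℤ) ≤ (b 0 : ℤ) - 2)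
        (by nlinarith : (0:ℤ) ≤ (b 1 : ℤ) * (b 2 : ℤ) - 3),
      mul_nonneg (by linarith : (0:ℤ) ≤ (b 1 : ℤ) - 3)
        (by linarith : (0:ℤ) ≤ 2 * (b 2 : ℤ) - 3)]
  | succ n hn ih =>
    rw [Finset.sum_range_succ, Finset.prod_range_succ]
    have hS : b 0 ≤ ∑ i ∈ Finset.range n, b i :=
      Finset.single_le_sum (f := b) (fun i _ => Nat.zero_le _) (by simp; omega)
    have hP : 6 ≤ ∏ i ∈ Finset.range n, b i := by omega
    have hbn : 2 ≤ b n := le_trans h0 (hm.monotone (Nat.zero_le n))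
    set S := ∑ i ∈ Finset.range n, b i
    set P := ∏ i ∈ Finset.range n, b i
    zify at ih hP hbn ⊢
    nlinarith [mul_nonneg (by linarith : (0:ℤ) ≤ (P:ℤ) - 6) (by linarith : (0:ℤ) ≤ (b n : ℤ) - 2)]

/-- Let `k ≥ 3` and let `b 0 < b 1 < … < b (k-1)` be pairwise
coprime integers all greater than `1`. Then `(∑ b i) / (∏ b i) ≤ 1/3`. -/
theorem sum_div_prod_le_third (k : ℕ) (hk : 3 ≤ k) (b : Fin k → ℕ)
    (hb1 : 1 < b ⟨0, by omega⟩) (hmono : StrictMono b)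
    (hcop : ∀ i j : Fin k, i ≠ j → Nat.Coprime (b i) (b j)) :
    (∑ i, (b i : ℚ)) / (∏ i, (b i : ℚ)) ≤ 1 / 3 := by
  set b' : ℕ → ℕ := fun i => if h : i < k then b ⟨i, h⟩ else b ⟨k - 1, by omega⟩ + i with hb'
  have hbi : ∀ i : Fin k, b' i.val = b i := by
    intro i; simp [hb', i.isLt]
  have hm : StrictMono b' := by
    intro i j hij
    by_cases hi : i < k
    · by_cases hj : j < k
      · simpa [hb', hi, hj] using hmono (show (⟨i, hi⟩ : Fin k) < ⟨j, hj⟩ from hij)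
      · have h1 : b ⟨i, hi⟩ ≤ b ⟨k - 1, by omega⟩ :=
          hmono.monotone (show (⟨i, hi⟩ : Fin k) ≤ ⟨k - 1, by omega⟩ from by
            simp [Fin.le_def]; omega)
        simp only [hb', dif_pos hi, dif_neg hj]
        omega
    · have hj : ¬ j < k := by omega
      simp only [hb', dif_neg hi, dif_neg hj]
      omega
  have h0 : 2 ≤ b' 0 := by
    have : b' 0 = b ⟨0, by omega⟩ := by simp [hb', show 0 < k by omega]
    omega
  have hc : Nat.Coprime (b' 0) (b' 2) := by
    have e0 : b' 0 = b ⟨0, by omega⟩ := by simp [hb', show 0 < k by omega]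
    have e2 : b' 2 = b ⟨2, by omega⟩ := by simp [hb', show 2 < k by omega]
    rw [e0, e2]
    exact hcop _ _ (by simp [Fin.ne_iff_vne])
  have key := aux_sum_prod b' h0 hm hc k hk
  have hsum : (∑ i : Fin k, (b i : ℚ)) = ((∑ i ∈ Finset.range k, b' i : ℕ) : ℚ) := by
    push_cast
    rw [← Fin.sum_univ_eq_sum_range (fun i => (b' i : ℚ)) k]
    exact Finset.sum_congr rfl fun i _ => by rw [hbi]
  have hprod : (∏ i : Fin k, (b i : ℚ)) = ((∏ i ∈ Finset.range k, b' i : ℕ) : ℚ) := by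
    push_cast
    rw [← Fin.prod_univ_eq_prod_range (fun i => (b' i : ℚ)) k]
    exact Finset.prod_congr rfl fun i _ => by rw [hbi]
  have hPpos : (0 : ℚ) < ((∏ i ∈ Finset.range k, b' i : ℕ) : ℚ) := by
    have : 0 < ∏ i ∈ Finset.range k, b' i :=
      Finset.prod_pos fun i _ => lt_of_lt_of_le (by omega) (hm.monotone (Nat.zero_le i))
    exact_mod_cast this
  rw [hsum, hprod, div_le_div_iff₀ hPpos (by norm_num)]
  have : ((3 * ∑ i ∈ Finset.range k, b' i : ℕ) : ℚ) ≤ ((∏ i ∈ Finset.range k, b' i : ℕ) : ℚ) := by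
    exact_mod_cast key
  push_cast at this ⊢
  linarith
end

section
/- Let n ≥ 1 and let a_0 ≤ a_1 ≤ … ≤ a_{n+1} and d be positive integers such that a_{n+1} divides d, a_0 + a_1 + … + a_{n+1} = d + 1 (Fano index 1), and for every index i the gcd of the numbers a_j over all j ≠ i equals 1 (well-formedness). Then (n+1)·a_{n+1} ≥ d. Moreover, if a_{n+1} > 1 and (n+1)·a_{n+1} = d, then a_0 > 1. -/
/-- Numerical conditions for a quasi-smooth well-formed Fano
weighted hypersurface `X_d ⊂ ℙ(a_0, …, a_{n+1})` of index 1: if `a_{n+1} ∣ d`,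
`∑ a_i = d + 1` and the weights are well-formed, then `(n+1)·a_{n+1} ≥ d`,
and if moreover `a_{n+1} > 1` and `(n+1)·a_{n+1} = d`, then `a_0 > 1`. -/
theorem fano_index_one_bound (n : ℕ) (hn : 1 ≤ n) (a : Fin (n + 2) → ℕ) (d : ℕ)
    (ha_pos : ∀ i, 0 < a i) (hd : 0 < d) (ha_mono : Monotone a)
    (hdvd : a (Fin.last (n + 1)) ∣ d)
    (hfano : ∑ i, a i = d + 1)
    (hwf : ∀ i : Fin (n + 2), (Finset.univ.erase i).gcd a = 1) :
    (n + 1) * a (Fin.last (n + 1)) ≥ d ∧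
    (1 < a (Fin.last (n + 1)) → (n + 1) * a (Fin.last (n + 1)) = d →
      1 < a ⟨0, by omega⟩) := by
  obtain ⟨m, hm⟩ : ∃ m, a (Fin.last (n + 1)) = m := ⟨_, rfl⟩
  rw [hm]
  rw [hm] at hdvd
  have hmpos : 0 < m := hm ▸ ha_pos _
  have hle : ∀ i, a i ≤ m := fun i => hm ▸ ha_mono (Fin.le_last i)
  have hsum_le : d + 1 ≤ (n + 2) * m := by
    rw [← hfano]
    calc ∑ i, a i ≤ ∑ _i : Fin (n + 2), m := Finset.sum_le_sum fun i _ => hle i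
      _ = (n + 2) * m := by simp [Finset.sum_const, mul_comm]
  obtain ⟨k, hk⟩ := hdvd
  have hklt : k < n + 2 := by
    have h1 : m * k < m * (n + 2) := by
      have : m * (n + 2) = (n + 2) * m := mul_comm _ _
      omega
    exact Nat.lt_of_mul_lt_mul_left h1
  have h1 : (n + 1) * m ≥ d := by
    rw [hk]
    calc m * k ≤ m * (n + 1) := Nat.mul_le_mul_left _ (by omega)
      _ = (n + 1) * m := mul_comm _ _
  refine ⟨h1, fun hm1 heq => ?_⟩
  by_contra h0
  have h0' : ¬ 1 < a ⟨0, Nat.succ_pos (n + 1)⟩ := h0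
  have ha0 : a ⟨0, Nat.succ_pos (n + 1)⟩ = 1 := by
    have := ha_pos ⟨0, Nat.succ_pos (n + 1)⟩; omega
  have hz : (⟨0, Nat.succ_pos (n + 1)⟩ : Fin (n + 2)) ∈ Finset.univ := Finset.mem_univ _
  have hsplit : a ⟨0, Nat.succ_pos (n + 1)⟩ + ∑ i ∈ Finset.univ.erase (⟨0, Nat.succ_pos (n + 1)⟩ : Fin (n + 2)), a i
      = ∑ i, a i := Finset.add_sum_erase _ _ hz
  have hcard : (Finset.univ.erase (⟨0, Nat.succ_pos (n + 1)⟩ : Fin (n + 2))).card = n + 1 := by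
    rw [Finset.card_erase_of_mem hz, Finset.card_univ, Fintype.card_fin]; omega
  have hsum_erase : ∑ i ∈ Finset.univ.erase (⟨0, Nat.succ_pos (n + 1)⟩ : Fin (n + 2)), a i = (n + 1) * m := by
    omega
  have hall : ∀ i ∈ Finset.univ.erase (⟨0, Nat.succ_pos (n + 1)⟩ : Fin (n + 2)), a i = m := by
    by_contra hc
    push_neg at hc
    obtain ⟨j, hj, hjne⟩ := hc
    have hjlt : a j < m := lt_of_le_of_ne (hle j) hjne
    have hlt : ∑ i ∈ Finset.univ.erase (⟨0, Nat.succ_pos (n + 1)⟩ : Fin (n + 2)), a i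
        < ∑ _i ∈ Finset.univ.erase (⟨0, Nat.succ_pos (n + 1)⟩ : Fin (n + 2)), m := by
      refine Finset.sum_lt_sum (fun i _ => hle i) ⟨j, hj, hjlt⟩
    rw [Finset.sum_const, hcard, smul_eq_mul] at hlt
    omega
  have hdvdgcd : m ∣ (Finset.univ.erase (⟨0, Nat.succ_pos (n + 1)⟩ : Fin (n + 2))).gcd a :=
    Finset.dvd_gcd fun i hi => (hall i hi) ▸ dvd_refl m
  rw [hwf _] at hdvdgcd
  have := Nat.le_of_dvd one_pos hdvdgcd
  exact absurd hm1 (by omega)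
end

section
/- Assume the numerical hypotheses of a smooth Fano weighted hypersurface stated in the context, and set γ := (n+1)·a_{n+1}/(ι·d). Then γ ≥ a_{n+1}/(2ι). Moreover, if equality γ = a_{n+1}/(2ι) holds, then ι = 1, n is even, a_0 = a_1 = … = a_{n−1} = 1, a_n = 2, a_{n+1} = n+1 and d = 2(n+1) (the case X_{2(n+1)} ⊂ P(1^{(n)}, 2, n+1)). -/
/-!
Comparing with `a_{n+1} / (2ι)`, the claim reduces to `d ≤ 2(n+1)` with its equality case.
The weights are pairwise coprime divisors of `d`, so their product divides `d`.
If `a_n = 1`, then `a_0 = … = a_n = 1` and `a_{n+1}` is a proper divisor of `d`, so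
`d ≥ 2 a_{n+1} = 2(d + ι - n - 1)`, i.e. `d < 2(n+1)`.
If `a_n ≥ 2`, let `s` and `p` be the sum and product of `a_0, …, a_{n-1}`. Then `2(n+1) - d` is
the sum of the nonnegative slacks `2(ι - 1)`, `2(p + n - 1 - s)`, `d - p a_n a_{n+1}`,
`(p - 1)(a_n a_{n+1} - 2)` and `(a_n - 2)(a_{n+1} - 2)`, so equality forces `ι = 1`,
`a_0 = … = a_{n-1} = 1` and `a_n = 2`, hence `a_{n+1} = n + 1`, which is odd being coprime to `2`.
-/

open Finset

theorem Finset.sum_add_one_le_prod_add_card {ι : Type*} (s : Finset ι) {f : ι → ℕ}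
    (hf : ∀ i ∈ s, 1 ≤ f i) : ∑ i ∈ s, f i + 1 ≤ ∏ i ∈ s, f i + #s := by
  classical
  induction s using Finset.induction_on with
  | empty => simp
  | insert j s hj ih =>
    rw [sum_insert hj, prod_insert hj, card_insert_of_notMem hj]
    have hfj := hf j (mem_insert_self j s)
    have ih := ih fun i hi => hf i (mem_insert_of_mem hi)
    have hp : 1 ≤ ∏ i ∈ s, f i := one_le_prod' fun i hi => hf i (mem_insert_of_mem hi)
    nlinarith

theorem le_two_mul_succ_of_two_le {n s p B A d ι : ℕ} (hsp : s + 1 ≤ p + n) (hp : 1 ≤ p)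
    (hB : 2 ≤ B) (hBA : B < A) (hd : p * B * A ≤ d) (hadj : s + B + A = d + ι) (hι : 1 ≤ ι) :
    d ≤ 2 * (n + 1) ∧ (d = 2 * (n + 1) → ι = 1 ∧ s = n ∧ p = 1 ∧ B = 2 ∧ A = n + 1) := by
  zify at *
  have slack : (2 * (n + 1) : ℤ) = d + 2 * (ι - 1) + 2 * (p + n - s - 1) + (d - p * B * A)
      + (p - 1) * (B * A - 2) + (B - 2) * (A - 2) := by linear_combination 2 * hadj
  have hp' : 0 ≤ ((p : ℤ) - 1) * (B * A - 2) := mul_nonneg (by linarith) (by nlinarith)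
  have hB' : 0 ≤ ((B : ℤ) - 2) * (A - 2) := mul_nonneg (by linarith) (by linarith)
  refine ⟨by linarith, fun heq => ?_⟩
  have hp0 : ((p : ℤ) - 1) * (B * A - 2) = 0 := by linarith
  have hB0 : ((B : ℤ) - 2) * (A - 2) = 0 := by linarith
  have hp1 : (p : ℤ) = 1 := by
    rcases mul_eq_zero.1 hp0 with h | h <;> [linarith; nlinarith]
  have hB2 : (B : ℤ) = 2 := by
    rcases mul_eq_zero.1 hB0 with h | h <;> linarith
  refine ⟨by linarith, by linarith, hp1, hB2, by linarith⟩

theorem Nat.two_mul_le_of_dvd_of_ne {A d : ℕ} (hdvd : A ∣ d) (hd : 0 < d) (hne : d ≠ A) :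
    2 * A ≤ d := by
  obtain ⟨q, rfl⟩ := hdvd
  have hq : 2 ≤ q := by
    rcases q with _ | _ | q
    · simp at hd
    · simp at hne
    · omega
  nlinarith

section RatioBound

variable {K : Type*} [Field K] [LinearOrder K] [IsStrictOrderedRing K] {x A ι d : K}

theorem mul_div_mul_eq_div_two_mul (hι : ι ≠ 0) (hd : d ≠ 0) :
    x * A / (ι * d) = A / (2 * ι) * (2 * x / d) := by
  field_simp

theorem mul_div_ge_div_two_iff (hA : 0 < A) (hι : 0 < ι) (hd : 0 < d) :
    x * A / (ι * d) ≥ A / (2 * ι) ↔ d ≤ 2 * x := by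
  rw [mul_div_mul_eq_div_two_mul hι.ne' hd.ne', ge_iff_le,
    le_mul_iff_one_le_right (by positivity), one_le_div hd]

theorem mul_div_eq_div_two_iff (hA : 0 < A) (hι : 0 < ι) (hd : 0 < d) :
    x * A / (ι * d) = A / (2 * ι) ↔ d = 2 * x := by
  rw [mul_div_mul_eq_div_two_mul hι.ne' hd.ne', mul_eq_left₀ (by positivity),
    div_eq_one_iff_eq hd.ne', eq_comm]

end RatioBound

theorem degree_le_two_mul_succ {n d ι : ℕ} {a : Fin (n + 2) → ℕ} (ha_pos : ∀ i, 0 < a i)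
    (ha_mono : Monotone a) (hd : 0 < d) (hι : 0 < ι) (hdvd : ∀ i, a i ∣ d)
    (hcop : ∀ i j, i ≠ j → Nat.Coprime (a i) (a j)) (hadj : ∑ i, a i = d + ι)
    (hlc : ∀ i, d ≠ a i) :
    d ≤ 2 * (n + 1) ∧ (d = 2 * (n + 1) →
      ι = 1 ∧ Even n ∧ (∀ i : Fin (n + 2), (i : ℕ) < n → a i = 1) ∧
        a ⟨n, by omega⟩ = 2 ∧ a (Fin.last (n + 1)) = n + 1) := by
  set A := a (Fin.last (n + 1))
  set B := a (Fin.last n).castSucc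
  have hsum : ∑ i : Fin n, a i.castSucc.castSucc + B + A = d + ι := by
    rw [← hadj, Fin.sum_univ_castSucc, Fin.sum_univ_castSucc]
  have hprod : (∏ i : Fin n, a i.castSucc.castSucc) * B * A ≤ d := by
    refine Nat.le_of_dvd hd ?_
    have : ∏ i, a i = (∏ i : Fin n, a i.castSucc.castSucc) * B * A := by
      rw [Fin.prod_univ_castSucc, Fin.prod_univ_castSucc]
    rw [← this]
    exact Fintype.prod_dvd_of_isRelPrime
      (fun i j hij => Nat.coprime_iff_isRelPrime.mp (hcop i j hij)) hdvd
  have hhead : ∀ i : Fin n, a i.castSucc.castSucc ≤ B := fun i =>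
    ha_mono (Fin.castSucc_le_castSucc_iff.2 (Fin.le_last i.castSucc))
  have hhead_one :
      ∑ i : Fin n, a i.castSucc.castSucc = n ↔ ∀ i : Fin n, a i.castSucc.castSucc = 1 := by
    simpa [eq_comm] using sum_eq_sum_iff_of_le (s := univ) (f := fun _ : Fin n => 1)
      (g := fun i => a i.castSucc.castSucc) fun i _ => ha_pos _
  obtain hB | hB : B = 1 ∨ 2 ≤ B := by have := ha_pos (Fin.last n).castSucc; omega
  · have hs : ∑ i : Fin n, a i.castSucc.castSucc = n :=
      hhead_one.2 fun i => le_antisymm (hB ▸ hhead i :) (ha_pos _)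
    have h2A : 2 * A ≤ d := Nat.two_mul_le_of_dvd_of_ne (hdvd _) hd (hlc _)
    exact ⟨by omega, fun h => by omega⟩
  · have hcopBA : Nat.Coprime B A := hcop _ _ (Fin.castSucc_lt_last _).ne
    have hBA : B < A := by
      refine lt_of_le_of_ne (ha_mono (Fin.le_last _)) fun h => ?_
      rw [← h, Nat.coprime_self] at hcopBA
      omega
    have hsp :
        ∑ i : Fin n, a i.castSucc.castSucc + 1 ≤ ∏ i : Fin n, a i.castSucc.castSucc + n := by
      simpa using sum_add_one_le_prod_add_card univ fun (i : Fin n) _ => ha_pos _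
    obtain ⟨hle, heq⟩ := le_two_mul_succ_of_two_le hsp (one_le_prod' fun i _ => ha_pos _) hB hBA
      hprod hsum hι
    refine ⟨hle, fun h => ?_⟩
    obtain ⟨hι1, hs, -, hB2, hA⟩ := heq h
    rw [hB2, hA, Nat.coprime_two_left, Nat.odd_add_one, Nat.not_odd_iff_even] at hcopBA
    exact ⟨hι1, hcopBA, fun i hi => hhead_one.1 hs ⟨i, hi⟩, hB2, hA⟩

/-- For the weights and degree of a smooth Fano weighted
hypersurface of index `ι`, setting `γ = (n+1)·a_{n+1}/(ι·d)`, one has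
`γ ≥ a_{n+1}/(2ι)`, and in case of equality: `ι = 1`, `n` is even,
`a_0 = … = a_{n-1} = 1`, `a_n = 2`, `a_{n+1} = n+1` and `d = 2(n+1)`. -/
theorem gamma_lower_bound (n : ℕ) (a : Fin (n + 2) → ℕ) (d ι : ℕ)
    (ha_pos : ∀ i, 0 < a i) (ha_mono : Monotone a)
    (hd : 0 < d) (hι : 0 < ι)
    (hdvd : ∀ i, a i ∣ d)
    (hcop : ∀ i j : Fin (n + 2), i ≠ j → Nat.Coprime (a i) (a j))
    (hadj : ∑ i, a i = d + ι)
    (hlc : ∀ i, d ≠ a i) :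
    ((n + 1 : ℚ) * (a (Fin.last (n + 1)) : ℚ)) / ((ι : ℚ) * (d : ℚ)) ≥
      (a (Fin.last (n + 1)) : ℚ) / (2 * (ι : ℚ)) ∧
    (((n + 1 : ℚ) * (a (Fin.last (n + 1)) : ℚ)) / ((ι : ℚ) * (d : ℚ)) =
        (a (Fin.last (n + 1)) : ℚ) / (2 * (ι : ℚ)) →
      ι = 1 ∧ Even n ∧ (∀ i : Fin (n + 2), (i : ℕ) < n → a i = 1) ∧
        a ⟨n, by omega⟩ = 2 ∧ a (Fin.last (n + 1)) = n + 1 ∧ d = 2 * (n + 1)) := by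
  obtain ⟨hle, heq⟩ := degree_le_two_mul_succ ha_pos ha_mono hd hι hdvd hcop hadj hlc
  have hA : (0 : ℚ) < a (Fin.last (n + 1)) := by exact_mod_cast ha_pos _
  have hι' : (0 : ℚ) < ι := by exact_mod_cast hι
  have hd' : (0 : ℚ) < d := by exact_mod_cast hd
  refine ⟨(mul_div_ge_div_two_iff hA hι' hd').2 (by exact_mod_cast hle), fun h => ?_⟩
  have hd2 : d = 2 * (n + 1) := by exact_mod_cast (mul_div_eq_div_two_iff hA hι' hd').1 h
  obtain ⟨hι1, heven, hhead, hpen, hlast⟩ := heq hd2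
  exact ⟨hι1, heven, hhead, hpen, hlast, hd2⟩
end

section
/- Assume the numerical hypotheses of a smooth Fano weighted hypersurface stated in the context, and set γ := (n+1)·a_{n+1}/(ι·d). Assume moreover ι ≤ 3 and a_{n−1} > 1. Then γ > 1. -/
lemma my_sum_le_prod {m : ℕ} (s : Finset (Fin m)) (f : Fin m → ℕ)
    (h2 : ∀ i ∈ s, 2 ≤ f i) (hs : s.Nonempty) :
    ∑ i ∈ s, f i ≤ ∏ i ∈ s, f i := by
  induction s using Finset.induction_on with
  | empty => exact absurd hs (Finset.not_nonempty_empty)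
  | @insert x s hx ih =>
    rw [Finset.sum_insert hx, Finset.prod_insert hx]
    rcases s.eq_empty_or_nonempty with rfl | hs'
    · simp
    · have hsum := ih (fun i hi => h2 i (Finset.mem_insert_of_mem hi)) hs'
      obtain ⟨y, hy⟩ := hs'
      have h2y : 2 ≤ f y := h2 y (Finset.mem_insert_of_mem hy)
      have hysum : f y ≤ ∑ i ∈ s, f i := Finset.single_le_sum (fun i _ => Nat.zero_le _) hy
      have hx2 : 2 ≤ f x := h2 x (Finset.mem_insert_self x s)
      nlinarith [hsum, h2y, hysum, hx2]

lemma my_prod_dvd {m : ℕ} (s : Finset (Fin m)) (a : Fin m → ℕ) (d : ℕ)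
    (hcop : ∀ i j : Fin m, i ≠ j → Nat.Coprime (a i) (a j))
    (hdvd : ∀ i, a i ∣ d) :
    ∏ i ∈ s, a i ∣ d := by
  induction s using Finset.induction_on with
  | empty => simp
  | @insert x s hx ih =>
    rw [Finset.prod_insert hx]
    refine Nat.Coprime.mul_dvd_of_dvd_of_dvd ?_ (hdvd x) ih
    exact Nat.Coprime.prod_right fun i hi => hcop x i (fun h => hx (h ▸ hi))

set_option maxHeartbeats 2000000 in
/-- For the weights and degree of a smooth Fano weighted
hypersurface with `ι ≤ 3` and `a_{n-1} > 1`, one has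
`γ = (n+1)·a_{n+1}/(ι·d) > 1`. -/
theorem gamma_case_anm1_gt_one (n : ℕ) (hn : 1 ≤ n) (a : Fin (n + 2) → ℕ) (d ι : ℕ)
    (ha_pos : ∀ i, 0 < a i) (ha_mono : Monotone a)
    (ha_top : 1 < a (Fin.last (n + 1)))
    (hd : 0 < d) (hι : 0 < ι)
    (hdvd : ∀ i, a i ∣ d)
    (hcop : ∀ i j : Fin (n + 2), i ≠ j → Nat.Coprime (a i) (a j))
    (hadj : ∑ i, a i = d + ι)
    (hlc : ∀ i, d ≠ a i)
    (hι3 : ι ≤ 3)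
    (hanm1 : 1 < a ⟨n - 1, by omega⟩) :
    ((n + 1 : ℚ) * (a (Fin.last (n + 1)) : ℚ)) / ((ι : ℚ) * (d : ℚ)) > 1 := by
  classical
  obtain ⟨i1, hv1⟩ : ∃ i : Fin (n + 2), (i : ℕ) = n - 1 := ⟨⟨n - 1, by omega⟩, rfl⟩
  obtain ⟨i2, hv2⟩ : ∃ i : Fin (n + 2), (i : ℕ) = n := ⟨⟨n, by omega⟩, rfl⟩
  obtain ⟨i3, hv3⟩ : ∃ i : Fin (n + 2), (i : ℕ) = n + 1 := ⟨Fin.last (n + 1), by simp⟩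
  have hlast : Fin.last (n + 1) = i3 := Fin.ext (by simp [hv3])
  rw [hlast] at ha_top ⊢
  have hanm1' : 1 < a i1 := by
    have he : (⟨n - 1, by omega⟩ : Fin (n + 2)) = i1 := Fin.ext (by simp [hv1])
    rwa [he] at hanm1
  have hne12 : i1 ≠ i2 := fun h => by rw [h] at hv1; omega
  have hne23 : i2 ≠ i3 := fun h => by rw [h] at hv2; omega
  have hne13 : i1 ≠ i3 := fun h => by rw [h] at hv1; omega
  -- the three top weights are strictly increasing
  have h12 : a i1 < a i2 := by
    have hle : a i1 ≤ a i2 := ha_mono (by rw [Fin.le_def]; omega)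
    rcases lt_or_eq_of_le hle with h | h
    · exact h
    · exfalso
      have hc := hcop i1 i2 hne12
      rw [h] at hc
      unfold Nat.Coprime at hc
      rw [Nat.gcd_self] at hc
      omega
  have h23 : a i2 < a i3 := by
    have hle : a i2 ≤ a i3 := ha_mono (by rw [Fin.le_def]; omega)
    rcases lt_or_eq_of_le hle with h | h
    · exact h
    · exfalso
      have hc := hcop i2 i3 hne23
      rw [h] at hc
      unfold Nat.Coprime at hc
      rw [Nat.gcd_self] at hc
      omega
  have hr4 : 4 ≤ a i3 := by omega
  -- the set of weights > 1
  set S : Finset (Fin (n + 2)) := Finset.univ.filter (fun i => 1 < a i) with hS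
  have hmemS : ∀ i, i ∈ S ↔ 1 < a i := by intro i; simp [hS]
  have hi1S : i1 ∈ S := (hmemS i1).2 hanm1'
  have hi2S : i2 ∈ S := (hmemS i2).2 (by omega)
  have hi3S : i3 ∈ S := (hmemS i3).2 ha_top
  set S' : Finset (Fin (n + 2)) := S.erase i3 with hS'
  have hi1S' : i1 ∈ S' := Finset.mem_erase.2 ⟨hne13, hi1S⟩
  have hi2S' : i2 ∈ S' := Finset.mem_erase.2 ⟨hne23, hi2S⟩
  set P : ℕ := ∏ i ∈ S', a i with hP
  set Sig : ℕ := ∑ i ∈ S', a i with hSig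
  -- product of weights in S divides d
  have hprodS : ∏ i ∈ S, a i ∣ d := my_prod_dvd S a d hcop hdvd
  have hprodS_eq : ∏ i ∈ S, a i = a i3 * P := by
    rw [hP, hS', Finset.mul_prod_erase S a hi3S]
  -- k := d / a i3
  have hrdvd : a i3 ∣ d := hdvd i3
  set k : ℕ := d / a i3 with hk
  have hdk : d = a i3 * k := (Nat.mul_div_cancel' hrdvd).symm
  have hrpos : 0 < a i3 := ha_pos i3
  have hPk : P ∣ k := by
    have h : a i3 * P ∣ a i3 * k := by rw [← hprodS_eq, ← hdk]; exact hprodS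
    exact (mul_dvd_mul_iff_left hrpos.ne').1 h
  have hkpos : 0 < k := by
    rcases Nat.eq_zero_or_pos k with h | h
    · rw [h, mul_zero] at hdk; omega
    · exact h
  have hPlek : P ≤ k := Nat.le_of_dvd hkpos hPk
  -- sum ≤ product on S'
  have hSigP : Sig ≤ P := by
    refine my_sum_le_prod S' a ?_ ⟨i2, hi2S'⟩
    intro i hi
    have := (hmemS i).1 (Finset.mem_of_mem_erase hi)
    omega
  -- cardinality facts
  have hcard3 : 3 ≤ S.card := by
    have hsub : ({i1, i2, i3} : Finset (Fin (n + 2))) ⊆ S := by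
      intro x hx
      simp only [Finset.mem_insert, Finset.mem_singleton] at hx
      rcases hx with rfl | rfl | rfl <;> assumption
    have hcard : ({i1, i2, i3} : Finset (Fin (n + 2))).card = 3 := by
      rw [Finset.card_insert_of_notMem (by simp [hne12, hne13]),
        Finset.card_insert_of_notMem (by simp [hne23])]
      simp
    rw [← hcard]
    exact Finset.card_le_card hsub
  have hcardtot : S.card + Sᶜ.card = n + 2 := by
    rw [Finset.card_add_card_compl]
    simp
  -- sum over complement
  have hsumcompl : ∑ i ∈ Sᶜ, a i = Sᶜ.card := by
    rw [Finset.card_eq_sum_ones]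
    refine Finset.sum_congr rfl fun i hi => ?_
    have h1 : ¬ (1 < a i) := by
      simp only [hS, Finset.mem_compl, Finset.mem_filter, Finset.mem_univ, true_and] at hi
      exact hi
    have := ha_pos i
    omega
  have hsumS : ∑ i ∈ S, a i = a i3 + Sig := by
    rw [hSig, hS', Finset.add_sum_erase S a hi3S]
  have hsplit : ∑ i ∈ S, a i + ∑ i ∈ Sᶜ, a i = d + ι := by
    rw [Finset.sum_add_sum_compl]; exact hadj
  -- main equation in ℕ
  have hmain : a i3 + Sig + Sᶜ.card = a i3 * k + ι := by
    rw [← hdk]; rw [hsumS, hsumcompl] at hsplit; omega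
  -- key inequality: ι * d < (n+1) * a i3
  have hkey : ι * d < (n + 1) * a i3 := by
    have hPpos : 0 < P := Finset.prod_pos (fun i _ => ha_pos i)
    have h1 : (0:ℤ) ≤ ((k:ℤ) - (P:ℤ)) * ((a i3 : ℤ) - (ι:ℤ)) :=
      mul_nonneg (by omega) (by omega)
    have h2 : (0:ℤ) ≤ ((P:ℤ) - 1) * ((a i3 : ℤ) - (ι:ℤ) - 1) :=
      mul_nonneg (by omega) (by omega)
    have hSigP' : (Sig:ℤ) ≤ (P:ℤ) := by exact_mod_cast hSigP
    have hcard3' : (3:ℤ) ≤ (S.card:ℤ) := by exact_mod_cast hcard3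
    have hEpos : (0:ℤ) < (k:ℤ) * ((a i3:ℤ) - (ι:ℤ)) + (ι:ℤ) + (S.card:ℤ) - 1
        - (Sig:ℤ) - (a i3:ℤ) := by nlinarith [h1, h2, hSigP', hcard3']
    have hrZ : (0:ℤ) < (a i3 : ℤ) := by exact_mod_cast hrpos
    have hprod := mul_pos hEpos hrZ
    have hn1 : ((n:ℤ)+1) = (a i3:ℤ)*(k:ℤ) + (ι:ℤ) - (Sig:ℤ) - (a i3:ℤ) + (S.card:ℤ) - 1 := by
      have hm' : (a i3:ℤ) + (Sig:ℤ) + ((Sᶜ:Finset (Fin (n+2))).card:ℤ) = (a i3:ℤ)*(k:ℤ) + (ι:ℤ) := by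
        exact_mod_cast hmain
      have hc' : ((S.card:ℤ)) + ((Sᶜ:Finset (Fin (n+2))).card:ℤ) = (n:ℤ)+2 := by
        exact_mod_cast hcardtot
      linarith
    have hgoal : (ι:ℤ) * ((a i3:ℤ) * (k:ℤ)) < ((n:ℤ)+1) * (a i3:ℤ) := by
      calc (ι:ℤ) * ((a i3:ℤ)*(k:ℤ))
          < (ι:ℤ)*((a i3:ℤ)*(k:ℤ)) + ((k:ℤ) * ((a i3:ℤ) - (ι:ℤ)) + (ι:ℤ) + (S.card:ℤ) - 1
            - (Sig:ℤ) - (a i3:ℤ)) * (a i3:ℤ) := by linarith [hprod]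
        _ = ((a i3:ℤ)*(k:ℤ) + (ι:ℤ) - (Sig:ℤ) - (a i3:ℤ) + (S.card:ℤ) - 1) * (a i3:ℤ) := by ring
        _ = ((n:ℤ)+1) * (a i3:ℤ) := by rw [← hn1]
    rw [hdk]
    zify
    linarith [hgoal]
  -- conclude in ℚ
  have hpos : (0 : ℚ) < (ι : ℚ) * (d : ℚ) := by
    have h1 : (0:ℚ) < (ι : ℚ) := by exact_mod_cast hι
    have h2 : (0:ℚ) < (d : ℚ) := by exact_mod_cast hd
    positivity
  rw [gt_iff_lt, lt_div_iff₀ hpos, one_mul]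
  have hq : ((ι * d : ℕ) : ℚ) < (((n + 1) * a i3 : ℕ) : ℚ) := by exact_mod_cast hkey
  push_cast at hq ⊢
  linarith
end

section
/- Let n ≥ 0, let a_0, …, a_{n+1} be positive integer weights, and let F ∈ ℂ[z_0,…,z_{n+1}] be a nonzero weighted homogeneous polynomial of degree d with respect to these weights, with d ≠ a_i for every i (the hypersurface X = (F = 0) is not a linear cone). Assume X is quasi-smooth: for every x ∈ ℂ^{n+2} with x ≠ 0 and F(x) = 0 there is an index j with (∂F/∂z_j)(x) ≠ 0. Let r be an index with a_r dividing d. Then either F(e_r) ≠ 0, or there exist an index j ≠ r with a_r dividing a_j and a scalar λ ∈ ℂ such that F(e_r + λ·e_j) ≠ 0; equivalently, after the graded coordinate change z_j ↦ z_j + λ·z_r^{a_j/a_r} (fixing the other variables), the transformed polynomial is weighted homogeneous of degree d and does not vanish at e_r (so the coordinate point P_r lies outside the transformed hypersurface). -/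
open MvPolynomial

private lemma prod_single_pow {N : ℕ} (r : Fin N) (k : Fin N → ℕ) :
    (∏ i, (Pi.single r (1:ℂ) : Fin N → ℂ) i ^ k i)
      = if ∀ i, i ≠ r → k i = 0 then 1 else 0 := by
  split_ifs with h
  · apply Finset.prod_eq_one
    intro i _
    by_cases hi : i = r
    · subst hi; simp
    · simp [h i hi]
  · push_neg at h
    obtain ⟨i, hir, hki⟩ := h
    apply Finset.prod_eq_zero (Finset.mem_univ i)
    simp [Pi.single_eq_of_ne hir, zero_pow hki]

private lemma prod_u_pow {N : ℕ} (r j : Fin N) (hjr : j ≠ r) (m : Fin N → ℕ) :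
    (∏ i, (if i = r then (1:Polynomial ℂ) else if i = j then Polynomial.X else 0) ^ m i)
      = if ∀ i, i ≠ r → i ≠ j → m i = 0 then Polynomial.X ^ m j else 0 := by
  split_ifs with h
  · rw [← Finset.prod_subset (Finset.subset_univ ({r, j} : Finset (Fin N)))
      (fun i _ hi => by
        simp only [Finset.mem_insert, Finset.mem_singleton, not_or] at hi
        simp [h i hi.1 hi.2])]
    rw [Finset.prod_pair (Ne.symm hjr)]
    simp [hjr]
  · push_neg at h
    obtain ⟨i, hir, hij, hmi⟩ := h
    apply Finset.prod_eq_zero (Finset.mem_univ i)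
    simp [hir, hij, zero_pow hmi]

private lemma eval_pderiv_single {N : ℕ} (r j : Fin N) (F : MvPolynomial (Fin N) ℂ) :
    eval (Pi.single r 1 : Fin N → ℂ) (pderiv j F)
      = ∑ m ∈ F.support, coeff m F * (m j : ℂ) *
          (if ∀ i, i ≠ r → ((m - Finsupp.single j 1 : Fin N →₀ ℕ)) i = 0 then 1 else 0) := by
  conv_lhs => rw [F.as_sum]
  rw [map_sum, map_sum]
  refine Finset.sum_congr rfl fun m hm => ?_
  rw [pderiv_monomial, eval_monomial, Finsupp.prod_pow, prod_single_pow]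

private lemma coeff_one_eq_pderiv {N : ℕ} (r j : Fin N) (hjr : j ≠ r)
    (F : MvPolynomial (Fin N) ℂ) :
    (MvPolynomial.aeval
        (fun i => if i = r then (1:Polynomial ℂ) else if i = j then Polynomial.X else 0)
        F).coeff 1
      = eval (Pi.single r 1 : Fin N → ℂ) (pderiv j F) := by
  conv_lhs => rw [F.as_sum]
  conv_rhs => rw [F.as_sum]
  rw [map_sum, Polynomial.finset_sum_coeff, map_sum, map_sum]
  refine Finset.sum_congr rfl fun m hm => ?_
  rw [aeval_monomial, pderiv_monomial, eval_monomial, Finsupp.prod_pow, Finsupp.prod_pow,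
    prod_u_pow r j hjr, prod_single_pow]
  by_cases hP : ∀ i, i ≠ r → i ≠ j → m i = 0
  · rw [if_pos hP]
    rw [Polynomial.algebraMap_eq, Polynomial.coeff_C_mul, Polynomial.coeff_X_pow]
    by_cases h1 : m j = 1
    · rw [if_pos h1.symm, if_pos, h1]
      · push_cast; ring
      · intro i hir
        rw [Finsupp.tsub_apply, Finsupp.single_apply]
        by_cases hij : i = j
        · subst hij; simp [h1]
        · rw [if_neg (Ne.symm hij)]
          simpa using hP i hir hij
    · rw [if_neg (fun h => h1 h.symm), mul_zero]
      by_cases h0 : m j = 0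
      · simp [h0]
      · rw [if_neg, mul_zero]
        push_neg
        refine ⟨j, hjr, ?_⟩
        rw [Finsupp.tsub_apply, Finsupp.single_apply, if_pos rfl]
        omega
  · rw [if_neg hP, mul_zero, Polynomial.coeff_zero, if_neg, mul_zero]
    push_neg at hP
    obtain ⟨i, hir, hij, hmi⟩ := hP
    push_neg
    refine ⟨i, hir, ?_⟩
    rw [Finsupp.tsub_apply, Finsupp.single_apply, if_neg (Ne.symm hij)]
    simpa using hmi

/-- Let `F` be a nonzero weighted homogeneous polynomial of
degree `d` with respect to positive weights `a_0, …, a_{n+1}`, with `d ≠ a_i`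
for every `i` (the hypersurface `X = (F = 0)` is not a linear cone), and
assume `X` is quasi-smooth.  If `a_r ∣ d`, then either `F(e_r) ≠ 0`, or there
exist `j ≠ r` with `a_r ∣ a_j` and `λ ∈ ℂ` such that `F(e_r + λ·e_j) ≠ 0`. -/
theorem coordinate_point_off_hypersurface (n : ℕ) (a : Fin (n + 2) → ℕ) (d : ℕ)
    (ha_pos : ∀ i, 0 < a i)
    (F : MvPolynomial (Fin (n + 2)) ℂ) (hF : F ≠ 0)
    (hFhom : ∀ m ∈ F.support, ∑ i, m i * a i = d)
    (hlc : ∀ i, d ≠ a i)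
    (hQS : ∀ x : Fin (n + 2) → ℂ, x ≠ 0 → eval x F = 0 →
      ∃ j, eval x (pderiv j F) ≠ 0)
    (r : Fin (n + 2)) (hr : a r ∣ d) :
    eval (Pi.single r 1 : Fin (n + 2) → ℂ) F ≠ 0 ∨
      ∃ j : Fin (n + 2), j ≠ r ∧ a r ∣ a j ∧
        ∃ lam : ℂ,
          eval ((Pi.single r 1 : Fin (n + 2) → ℂ) +
            lam • (Pi.single j 1 : Fin (n + 2) → ℂ)) F ≠ 0 := by
  set e : Fin (n + 2) → ℂ := Pi.single r 1 with he_def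
  by_cases h0 : eval e F ≠ 0
  · exact Or.inl h0
  push_neg at h0
  have he_ne : e ≠ 0 := by
    intro h
    have := congrFun h r
    simp [he_def] at this
  obtain ⟨j, hj⟩ := hQS e he_ne h0
  -- j ≠ r
  have hjr : j ≠ r := by
    intro hjr
    subst hjr
    -- show eval e (pderiv j F) * a j = d * eval e F = 0
    apply hj
    have hcond : ∀ m : Fin (n+2) →₀ ℕ,
        (∀ i, i ≠ j → ((m - Finsupp.single j 1 : Fin (n+2) →₀ ℕ)) i = 0)
          ↔ (∀ i, i ≠ j → m i = 0) := by
      intro m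
      refine forall_congr' fun i => imp_congr_right fun hij => ?_
      rw [Finsupp.tsub_apply, Finsupp.single_apply, if_neg (Ne.symm hij)]
      simp
    have key : eval e (pderiv j F) * (a j : ℂ) = (d : ℂ) * eval e F := by
      rw [eval_pderiv_single j j F, eval_eq', Finset.sum_mul, Finset.mul_sum]
      refine Finset.sum_congr rfl fun m hm => ?_
      rw [prod_single_pow j (fun i => m i)]
      by_cases hc : ∀ i, i ≠ j → m i = 0
      · rw [if_pos ((hcond m).mpr hc), if_pos hc]
        have hd : m j * a j = d := by
          rw [← hFhom m hm]
          rw [Finset.sum_eq_single j (fun b _ hb => by rw [hc b hb, zero_mul])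
            (fun h => absurd (Finset.mem_univ j) h)]
        have : ((m j : ℂ)) * (a j : ℂ) = (d : ℂ) := by
          push_cast [← hd]; ring
        calc coeff m F * ↑(m j) * 1 * ↑(a j) = coeff m F * (↑(m j) * ↑(a j)) := by ring
          _ = ↑d * (coeff m F * 1) := by rw [this]; ring
      · rw [if_neg (fun h => hc ((hcond m).mp h)), if_neg hc]
        ring
    rw [h0, mul_zero] at key
    have har : (a j : ℂ) ≠ 0 := by
      exact_mod_cast (ha_pos j).ne'
    exact (mul_eq_zero.mp key).resolve_right har
  -- extract the monomial giving a_r ∣ a_j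
  have hsum := eval_pderiv_single r j F
  rw [hsum] at hj
  obtain ⟨m, hm, hterm⟩ := Finset.exists_ne_zero_of_sum_ne_zero hj
  have hmj : m j ≠ 0 := by
    intro h
    rw [h] at hterm
    simp at hterm
  have hcondm : ∀ i, i ≠ r → ((m - Finsupp.single j 1 : Fin (n+2) →₀ ℕ)) i = 0 := by
    by_contra hc
    rw [if_neg hc, mul_zero] at hterm
    exact hterm rfl
  have hmj1 : m j = 1 := by
    have := hcondm j hjr
    rw [Finsupp.tsub_apply, Finsupp.single_apply, if_pos rfl] at this
    omega
  have hmo : ∀ i, i ≠ r → i ≠ j → m i = 0 := by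
    intro i hir hij
    have := hcondm i hir
    rwa [Finsupp.tsub_apply, Finsupp.single_apply, if_neg (Ne.symm hij), Nat.sub_zero] at this
  have hdeg : m r * a r + a j = d := by
    rw [← hFhom m hm]
    rw [← Finset.sum_subset (Finset.subset_univ ({r, j} : Finset (Fin (n+2))))
      (fun i _ hi => by
        simp only [Finset.mem_insert, Finset.mem_singleton, not_or] at hi
        rw [hmo i hi.1 hi.2, zero_mul])]
    rw [Finset.sum_pair (Ne.symm hjr), hmj1, one_mul]
  have hdvd : a r ∣ a j := by
    have : a j = d - m r * a r := by omega
    rw [this]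
    exact Nat.dvd_sub hr (dvd_mul_left _ _)
  right
  refine ⟨j, hjr, hdvd, ?_⟩
  by_contra hl
  push_neg at hl
  set u : Fin (n + 2) → Polynomial ℂ :=
    fun i => if i = r then (1:Polynomial ℂ) else if i = j then Polynomial.X else 0 with hu_def
  have hG : (MvPolynomial.aeval u F : Polynomial ℂ) = 0 := by
    apply Polynomial.funext
    intro lam
    rw [Polynomial.eval_zero]
    have hcomp : (Polynomial.evalRingHom lam).comp ((MvPolynomial.aeval u :
          MvPolynomial (Fin (n+2)) ℂ →ₐ[ℂ] Polynomial ℂ) : MvPolynomial (Fin (n+2)) ℂ →+* Polynomial ℂ)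
        = (MvPolynomial.eval (e + lam • (Pi.single j 1 : Fin (n + 2) → ℂ))) := by
      apply MvPolynomial.ringHom_ext
      · intro c
        simp
      · intro i
        simp only [RingHom.comp_apply, RingHom.coe_coe, aeval_X, eval_X,
          Polynomial.coe_evalRingHom, Pi.add_apply, Pi.smul_apply, smul_eq_mul, hu_def, he_def]
        by_cases hir : i = r
        · subst hir
          simp [Pi.single_eq_of_ne hjr.symm]
        · by_cases hij : i = j
          · subst hij
            simp [hjr]
          · simp [hir, hij, Pi.single_eq_of_ne (fun h => hir h), Pi.single_eq_of_ne (fun h => hij h)]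
    have h1 := RingHom.congr_fun hcomp F
    simp only [RingHom.comp_apply, RingHom.coe_coe, Polynomial.coe_evalRingHom] at h1
    rw [h1]
    exact hl lam
  have hkey := coeff_one_eq_pderiv r j hjr F
  rw [← hu_def] at hkey
  rw [hG, Polynomial.coeff_zero, hsum] at hkey
  exact hj hkey.symm
end

section
/- Let n ≥ 2 and let 1 = a_0 ≤ a_1 ≤ … ≤ a_{n+1} be positive integer weights, and let c_1 = #{i : a_i = 1}. Let q ∈ ℂ^{n+2} be a vector that is not a scalar multiple of e_0 and such that not all of q_0, q_1, …, q_{c_1−1} are zero. Then there exists a weighted homogeneous polynomial G ∈ ℂ[z_0,…,z_{n+1}] of degree a_{n+1} with G(e_0) = 0 and G(q) ≠ 0. -/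
open MvPolynomial

/-- Let `n ≥ 2`, let `1 = a_0 ≤ a_1 ≤ … ≤ a_{n+1}` be weights
and `c_1 = #{i : a_i = 1}`.  If `q ∈ ℂ^{n+2}` is not a scalar multiple of `e_0`
and not all of `q_0, …, q_{c_1−1}` vanish, then there is a weighted homogeneous
polynomial `G` of degree `a_{n+1}` with `G(e_0) = 0` and `G(q) ≠ 0`. -/
theorem base_locus_top_degree (n : ℕ) (hn : 2 ≤ n) (a : Fin (n + 2) → ℕ)
    (ha0 : a ⟨0, by omega⟩ = 1) (ha_mono : Monotone a)
    (c1 : ℕ) (hc1 : c1 = (Finset.univ.filter (fun i : Fin (n + 2) => a i = 1)).card)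
    (q : Fin (n + 2) → ℂ)
    (hq1 : ¬ ∃ c : ℂ, q = c • (Pi.single ⟨0, by omega⟩ 1 : Fin (n + 2) → ℂ))
    (hq2 : ∃ i : Fin (n + 2), (i : ℕ) < c1 ∧ q i ≠ 0) :
    ∃ G : MvPolynomial (Fin (n + 2)) ℂ,
      (∀ m ∈ G.support, ∑ i, m i * a i = a (Fin.last (n + 1))) ∧
      eval (Pi.single ⟨0, by omega⟩ 1 : Fin (n + 2) → ℂ) G = 0 ∧
      eval q G ≠ 0 := by
  obtain ⟨i, hic, hqi⟩ := hq2
  have hlow : ∀ k : Fin (n + 2), 1 ≤ a k := by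
    intro k
    have : a ⟨0, by omega⟩ ≤ a k := ha_mono (by exact Fin.mk_le_of_le_val (Nat.zero_le _))
    omega
  -- a i = 1
  have hai : a i = 1 := by
    by_contra h
    have hS : (Finset.univ.filter (fun k : Fin (n+2) => a k = 1)) ⊆ Finset.Iio i := by
      intro k hk
      simp only [Finset.mem_filter, Finset.mem_univ, true_and] at hk
      simp only [Finset.mem_Iio]
      by_contra hki
      push_neg at hki
      have h2 := ha_mono hki
      have h3 := hlow i
      omega
    have hcard := Finset.card_le_card hS
    rw [Fin.card_Iio] at hcard
    omega
  -- a nonzero coordinate away from 0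
  obtain ⟨j, hj0, hqj⟩ : ∃ j : Fin (n+2), j ≠ ⟨0, by omega⟩ ∧ q j ≠ 0 := by
    by_contra h
    push_neg at h
    apply hq1
    refine ⟨q ⟨0, by omega⟩, funext fun k => ?_⟩
    by_cases hk : k = ⟨0, by omega⟩
    · subst hk; simp
    · rw [h k hk, Pi.smul_apply, Pi.single_eq_of_ne hk, smul_zero]
  set d := a (Fin.last (n + 1)) with hd
  have haj : a j ≤ d := ha_mono (Fin.le_last j)
  set m : Fin (n + 2) →₀ ℕ := Finsupp.single i (d - a j) + Finsupp.single j 1 with hm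
  have hmj : m j ≠ 0 := by
    simp only [hm, Finsupp.add_apply, Finsupp.single_apply]
    split <;> simp
  refine ⟨monomial m 1, ?_, ?_, ?_⟩
  · intro m' hm'
    rw [support_monomial, if_neg one_ne_zero, Finset.mem_singleton] at hm'
    subst hm'
    have : ∑ k, m k * a k = (d - a j) * a i + 1 * a j := by
      simp only [hm, Finsupp.add_apply, add_mul, Finset.sum_add_distrib,
        Finsupp.single_apply, ite_mul, zero_mul]
      rw [Finset.sum_ite_eq, Finset.sum_ite_eq]
      simp
    rw [this, hai]
    omega
  · rw [eval_monomial]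
    have hjsup : j ∈ m.support := Finsupp.mem_support_iff.mpr hmj
    rw [Finsupp.prod]
    rw [Finset.prod_eq_zero hjsup]
    · ring
    · rw [Pi.single_eq_of_ne hj0]
      exact zero_pow hmj
  · rw [eval_monomial, one_mul, Finsupp.prod]
    rw [Finset.prod_ne_zero_iff]
    intro k hk
    have hksup : k = i ∨ k = j := by
      have := Finsupp.support_add hk
      simp only [Finset.mem_union] at this
      rcases this with h | h
      · left; exact Finset.mem_singleton.mp (Finsupp.support_single_subset h)
      · right; exact Finset.mem_singleton.mp (Finsupp.support_single_subset h)
    rcases hksup with rfl | rfl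
    · exact pow_ne_zero _ hqi
    · exact pow_ne_zero _ hqj
end

section
/- Let a, b, d be positive integers with 1 < a < b and a·b dividing d. Then (a + b − 2)/d ≤ 1/2, and equality holds if and only if a = 2 and d = 2b. -/
/-- Let `a, b, d` be positive integers with `1 < a < b` and
`a·b ∣ d`.  Then `(a + b − 2)/d ≤ 1/2`, with equality if and only if `a = 2`
and `d = 2b`. -/
theorem weight_sum_ratio_le_half (a b d : ℕ) (ha : 1 < a) (hab : a < b)
    (hd : 0 < d) (hdvd : a * b ∣ d) :
    ((a : ℚ) + (b : ℚ) - 2) / (d : ℚ) ≤ 1 / 2 ∧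
    (((a : ℚ) + (b : ℚ) - 2) / (d : ℚ) = 1 / 2 ↔ a = 2 ∧ d = 2 * b) := by
  obtain ⟨k, hk⟩ := hdvd
  have hk1 : 1 ≤ k := by
    rcases Nat.eq_zero_or_pos k with h | h
    · simp [h] at hk; omega
    · exact h
  have h2 : 2 * a + 2 * b ≤ a * b + 4 := by nlinarith
  have h1 : a * b ≤ a * b * k := Nat.le_mul_of_pos_right _ hk1
  have key : 2 * a + 2 * b ≤ d + 4 := by omega
  have hdq : (0 : ℚ) < (d : ℚ) := by exact_mod_cast hd
  constructor
  · rw [div_le_div_iff₀ hdq (by norm_num)]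
    have : (2 * a + 2 * b : ℚ) ≤ (d : ℚ) + 4 := by exact_mod_cast key
    linarith
  · constructor
    · intro hEq
      rw [div_eq_div_iff hdq.ne' (by norm_num)] at hEq
      have hnat : 2 * a + 2 * b = d + 4 := by
        have h4 : ((2 * a + 2 * b : ℕ) : ℚ) = ((d + 4 : ℕ) : ℚ) := by
          push_cast; linarith
        exact_mod_cast h4
      have hdab : d = a * b := by omega
      have ha2 : a = 2 := by nlinarith
      constructor
      · exact ha2
      · omega
    · rintro ⟨rfl, rfl⟩
      rw [div_eq_div_iff hdq.ne' (by norm_num)]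
      push_cast; ring
end
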